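/- arXiv:1607.04631 — 4 statements merged into one kernel-verified Lean document; each statement's English description precedes it below -/
import Mathlib

section
/- Let k ≥ 2 be an integer, y ∈ ℝⁿ with |y| < 1, and let W be the vector field W(x) = -(1/k)·(((1-2⟨x,y⟩+|y|²)/|x-y|²)^{k/2} - 1)·(x-y) + (1/(k-2))·(((1-2⟨x,y⟩+|y|²)/|x-y|²)^{(k-2)/2} - 1)·y for k > 2, and W(x) = -(1/2)·((1-2⟨x,y⟩+|y|²)/|x-y|² - 1)·(x-y) + (1/2)·log((1-2⟨x,y⟩+|y|²)/|x-y|²)·y for k = 2. Then for every x in the open unit ball with x ≠ y and every orthonormal family e₁,…,e_k in ℝⁿ, the trace ∑_{i=1}^k ⟨D_{e_i} W(x), e_i⟩ ≤ 1, where D_{e_i} W denotes the directional derivative of W in direction e_i. -/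
/-!
Write `u(x) = (1 - 2⟪x, y⟫ + ‖y‖²) / ‖x - y‖²` and `W = φ(u) (x - y) + ψ(u) y` with
`φ(t) = -(t^{k/2} - 1) / k` and `ψ'(t) = t^{(k-4)/2} / 2`, so that `φ' = -t ψ'`.
Since `Du(v) = -2 (⟪y, v⟫ + u ⟪x - y, v⟫) / ‖x - y‖²`, this relation turns
`⟪D_v W, v⟫ - φ(u)` for a unit vector `v` into the difference of squares
`-2 ψ'(u) (⟪y, v⟫² - u² ⟪x - y, v⟫²) / ‖x - y‖²`.
Dropping the `⟪y, eᵢ⟫²` terms and applying Bessel's inequality to `x - y` bounds the trace by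
`k φ(u) + 2 ψ'(u) u² = 1`.
-/

open scoped InnerProductSpace

lemma Orthonormal.sum_inner_sq_le {E ι : Type*} [NormedAddCommGroup E] [InnerProductSpace ℝ E]
    [Fintype ι] {e : ι → E} (he : Orthonormal ℝ e) (w : E) :
    ∑ i, ⟪w, e i⟫_ℝ ^ 2 ≤ ‖w‖ ^ 2 := by
  simpa [real_inner_comm, sq_abs] using he.sum_inner_products_le (s := Finset.univ) w

section

variable {E : Type*} [NormedAddCommGroup E] [InnerProductSpace ℝ E] {x y : E}

noncomputable def ratio (y x : E) : ℝ := (1 - 2 * ⟪x, y⟫_ℝ + ‖y‖ ^ 2) / ‖x - y‖ ^ 2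

lemma ratio_pos (hx : ‖x‖ < 1) (hxy : x ≠ y) : 0 < ratio y x := by
  have hS : 0 < ‖x - y‖ := norm_pos_iff.mpr (sub_ne_zero.mpr hxy)
  have : ‖x - y‖ ^ 2 = ‖x‖ ^ 2 - 2 * ⟪x, y⟫_ℝ + ‖y‖ ^ 2 := norm_sub_sq_real x y
  refine div_pos ?_ (by positivity)
  nlinarith [norm_nonneg x]

lemma hasFDerivAt_ratio (hxy : x ≠ y) :
    HasFDerivAt (ratio y)
      (-(2 / ‖x - y‖ ^ 2) • (innerSL ℝ y + ratio y x • innerSL ℝ (x - y))) x := by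
  have hS : ‖x - y‖ ^ 2 ≠ 0 := pow_ne_zero 2 (norm_ne_zero_iff.mpr (sub_ne_zero.mpr hxy))
  have hnum : HasFDerivAt (fun z : E => 1 - 2 * ⟪z, y⟫_ℝ + ‖y‖ ^ 2) (-(2 : ℝ) • innerSL ℝ y) x := by
    simpa [real_inner_comm] using
      (((innerSL ℝ y).hasFDerivAt (x := x)).const_mul (2 : ℝ)).const_sub 1 |>.add_const (‖y‖ ^ 2)
  have hden := ((hasFDerivAt_id x).sub_const y).norm_sq
  have hfun : ratio y = fun z => (1 - 2 * ⟪z, y⟫_ℝ + ‖y‖ ^ 2) * (‖z - y‖ ^ 2)⁻¹ := by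
    funext z; exact div_eq_mul_inv _ _
  rw [hfun]
  refine (hnum.mul ((hasDerivAt_inv hS).comp_hasFDerivAt x hden)).congr_fderiv ?_
  ext v
  simp only [id_eq, map_sub, ContinuousLinearMap.comp_id, neg_smul, smul_neg, Function.comp_apply,
    add_apply, neg_apply, smul_apply, sub_apply, coe_innerSL_apply, nsmul_eq_mul, Nat.cast_ofNat,
    smul_eq_mul, smul_add]
  field_simp
  ring

lemma HasFDerivAt.smul_sub_add_smul {a b : E → ℝ} {a' b' : E →L[ℝ] ℝ}
    (ha : HasFDerivAt a a' x) (hb : HasFDerivAt b b' x) :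
    HasFDerivAt (fun z => a z • (z - y) + b z • y)
      (a x • ContinuousLinearMap.id ℝ E + a'.smulRight (x - y) + b'.smulRight y) x := by
  refine (ha.smul ((hasFDerivAt_id x).sub_const y)).add
    (hb.smul (hasFDerivAt_const y x)) |>.congr_fderiv ?_
  simp

noncomputable def ratioField (φ ψ : ℝ → ℝ) (y z : E) : E :=
  φ (ratio y z) • (z - y) + ψ (ratio y z) • y

lemma inner_fderiv_ratioField_apply_self {φ ψ : ℝ → ℝ} {c : ℝ}
    (hφ : HasDerivAt φ (-ratio y x * c) (ratio y x)) (hψ : HasDerivAt ψ c (ratio y x))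
    (hxy : x ≠ y) (v : E) :
    ⟪fderiv ℝ (ratioField φ ψ y) x v, v⟫_ℝ =
      φ (ratio y x) * ‖v‖ ^ 2
        - 2 * c / ‖x - y‖ ^ 2 * (⟪y, v⟫_ℝ ^ 2 - ratio y x ^ 2 * ⟪x - y, v⟫_ℝ ^ 2) := by
  have hR := hasFDerivAt_ratio hxy
  unfold ratioField
  rw [(HasFDerivAt.smul_sub_add_smul (a := fun z => φ (ratio y z)) (b := fun z => ψ (ratio y z))
    (hφ.comp_hasFDerivAt x hR) (hψ.comp_hasFDerivAt x hR)).fderiv]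
  simp only [add_apply, smul_apply, ContinuousLinearMap.smulRight_apply,
    ContinuousLinearMap.id_apply, innerSL_apply_apply, smul_eq_mul, inner_add_left,
    real_inner_smul_left, real_inner_self_eq_norm_sq]
  ring

lemma sum_inner_fderiv_ratioField_le {ι : Type*} [Fintype ι] {e : ι → E} (he : Orthonormal ℝ e)
    {φ ψ : ℝ → ℝ} {c : ℝ} (hφ : HasDerivAt φ (-ratio y x * c) (ratio y x))
    (hψ : HasDerivAt ψ c (ratio y x)) (hc : 0 ≤ c) (hxy : x ≠ y) :
    ∑ i, ⟪fderiv ℝ (ratioField φ ψ y) x (e i), e i⟫_ℝ ≤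
      Fintype.card ι * φ (ratio y x) + 2 * c * ratio y x ^ 2 := by
  have hN : ‖x - y‖ ≠ 0 := norm_ne_zero_iff.mpr (sub_ne_zero.mpr hxy)
  set K := 2 * c / ‖x - y‖ ^ 2
  have hK : 0 ≤ K := by positivity
  calc _ = ∑ i, (φ (ratio y x) - K * (⟪y, e i⟫_ℝ ^ 2 - ratio y x ^ 2 * ⟪x - y, e i⟫_ℝ ^ 2)) := by
        simp only [inner_fderiv_ratioField_apply_self hφ hψ hxy, he.1, one_pow, mul_one, K]
    _ ≤ ∑ i, (φ (ratio y x) + K * ratio y x ^ 2 * ⟪x - y, e i⟫_ℝ ^ 2) := by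
        gcongr with i
        nlinarith [mul_nonneg hK (sq_nonneg ⟪y, e i⟫_ℝ)]
    _ = Fintype.card ι * φ (ratio y x) + K * ratio y x ^ 2 * ∑ i, ⟪x - y, e i⟫_ℝ ^ 2 := by
        rw [Finset.sum_add_distrib, ← Finset.mul_sum, Finset.sum_const, Finset.card_univ,
          nsmul_eq_mul]
    _ ≤ Fintype.card ι * φ (ratio y x) + K * ratio y x ^ 2 * ‖x - y‖ ^ 2 := by
        gcongr
        exact he.sum_inner_sq_le (x - y)
    _ = Fintype.card ι * φ (ratio y x) + 2 * c * ratio y x ^ 2 := by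
        simp only [K]
        field_simp [hN]

end

noncomputable def radialCoeff (k t : ℝ) : ℝ := -(1 / k) * (t ^ (k / 2) - 1)

lemma hasDerivAt_radialCoeff {k t : ℝ} (hk : k ≠ 0) (ht : 0 < t) :
    HasDerivAt (radialCoeff k) (-t * (1 / 2 * t ^ ((k - 4) / 2))) t := by
  refine (((Real.hasDerivAt_rpow_const (Or.inl ht.ne')).sub_const 1).const_mul _).congr_deriv ?_
  rw [show k / 2 - 1 = (k - 4) / 2 + 1 by ring, Real.rpow_add_one ht.ne']
  field_simp

lemma mul_radialCoeff_add {k t : ℝ} (hk : k ≠ 0) (ht : 0 < t) :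
    k * radialCoeff k t + 2 * (1 / 2 * t ^ ((k - 4) / 2)) * t ^ 2 = 1 := by
  have h : t ^ ((k - 4) / 2) * t ^ 2 = t ^ (k / 2) := by
    rw [← Real.rpow_natCast, ← Real.rpow_add ht]
    norm_num
    ring_nf
  rw [radialCoeff]
  field_simp
  linear_combination h

lemma hasDerivAt_rpow_sub_one_div {k t : ℝ} (hk : k ≠ 2) (ht : 0 < t) :
    HasDerivAt (fun t => 1 / (k - 2) * (t ^ ((k - 2) / 2) - 1)) (1 / 2 * t ^ ((k - 4) / 2)) t := by
  refine (((Real.hasDerivAt_rpow_const (Or.inl ht.ne')).sub_const 1).const_mul _).congr_deriv ?_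
  have : k - 2 ≠ 0 := sub_ne_zero.mpr hk
  rw [show (k - 2) / 2 - 1 = (k - 4) / 2 by ring]
  field_simp

lemma hasDerivAt_half_log {t : ℝ} (ht : 0 < t) :
    HasDerivAt (fun t => 1 / 2 * Real.log t) (1 / 2 * t ^ (((2 : ℕ) - 4 : ℝ) / 2)) t := by
  rw [show (((2 : ℕ) - 4 : ℝ) / 2) = -1 by norm_num, Real.rpow_neg_one]
  exact (Real.hasDerivAt_log ht.ne').const_mul _

theorem stmt_4_general (n k : ℕ) (hk : 2 ≤ k) (y : EuclideanSpace ℝ (Fin n))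
    (W : EuclideanSpace ℝ (Fin n) → EuclideanSpace ℝ (Fin n))
    (hWgt : 2 < k → ∀ x, W x =
      (-(1 / (k : ℝ)) * (((1 - 2 * ⟪x, y⟫_ℝ + ‖y‖ ^ 2) / ‖x - y‖ ^ 2) ^ ((k : ℝ) / 2) - 1)) • (x - y)
      + ((1 / ((k : ℝ) - 2)) * (((1 - 2 * ⟪x, y⟫_ℝ + ‖y‖ ^ 2) / ‖x - y‖ ^ 2) ^ (((k : ℝ) - 2) / 2) - 1)) • y)
    (hWeq : k = 2 → ∀ x, W x =
      (-(1 / 2 : ℝ) * ((1 - 2 * ⟪x, y⟫_ℝ + ‖y‖ ^ 2) / ‖x - y‖ ^ 2 - 1)) • (x - y)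
      + ((1 / 2 : ℝ) * Real.log ((1 - 2 * ⟪x, y⟫_ℝ + ‖y‖ ^ 2) / ‖x - y‖ ^ 2)) • y)
    (x : EuclideanSpace ℝ (Fin n)) (hx : ‖x‖ < 1) (hxy : x ≠ y)
    (e : Fin k → EuclideanSpace ℝ (Fin n)) (he : Orthonormal ℝ e) :
    ∑ i, ⟪fderiv ℝ W x (e i), e i⟫_ℝ ≤ 1 := by
  have hU := ratio_pos hx hxy
  have hk0 : (k : ℝ) ≠ 0 := by positivity
  obtain ⟨ψ, hW, hψ⟩ : ∃ ψ : ℝ → ℝ, W = ratioField (radialCoeff k) ψ y ∧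
      HasDerivAt ψ (1 / 2 * ratio y x ^ (((k : ℝ) - 4) / 2)) (ratio y x) := by
    rcases hk.lt_or_eq with hk2 | rfl
    · exact ⟨fun t => 1 / ((k : ℝ) - 2) * (t ^ (((k : ℝ) - 2) / 2) - 1), funext (hWgt hk2),
        hasDerivAt_rpow_sub_one_div (by exact_mod_cast hk2.ne') hU⟩
    · refine ⟨_, funext fun z => ?_, hasDerivAt_half_log hU⟩
      simp [hWeq rfl z, ratioField, radialCoeff, ratio]
  calc ∑ i, ⟪fderiv ℝ W x (e i), e i⟫_ℝ
      ≤ Fintype.card (Fin k) * radialCoeff k (ratio y x)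
          + 2 * (1 / 2 * ratio y x ^ (((k : ℝ) - 4) / 2)) * ratio y x ^ 2 :=
        hW ▸ sum_inner_fderiv_ratioField_le he (hasDerivAt_radialCoeff hk0 hU) hψ (by positivity) hxy
    _ = 1 := by rw [Fintype.card_fin, mul_radialCoeff_add hk0 hU]

theorem stmt_4 (n k : ℕ) (hk : 2 ≤ k) (y : EuclideanSpace ℝ (Fin n)) (hy : ‖y‖ < 1)
    (W : EuclideanSpace ℝ (Fin n) → EuclideanSpace ℝ (Fin n))
    (hWgt : 2 < k → ∀ x, W x =
      (-(1 / (k : ℝ)) * (((1 - 2 * ⟪x, y⟫_ℝ + ‖y‖ ^ 2) / ‖x - y‖ ^ 2) ^ ((k : ℝ) / 2) - 1)) • (x - y)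
      + ((1 / ((k : ℝ) - 2)) * (((1 - 2 * ⟪x, y⟫_ℝ + ‖y‖ ^ 2) / ‖x - y‖ ^ 2) ^ (((k : ℝ) - 2) / 2) - 1)) • y)
    (hWeq : k = 2 → ∀ x, W x =
      (-(1 / 2 : ℝ) * ((1 - 2 * ⟪x, y⟫_ℝ + ‖y‖ ^ 2) / ‖x - y‖ ^ 2 - 1)) • (x - y)
      + ((1 / 2 : ℝ) * Real.log ((1 - 2 * ⟪x, y⟫_ℝ + ‖y‖ ^ 2) / ‖x - y‖ ^ 2)) • y)
    (x : EuclideanSpace ℝ (Fin n)) (hx : ‖x‖ < 1) (hxy : x ≠ y)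
    (e : Fin k → EuclideanSpace ℝ (Fin n)) (he : Orthonormal ℝ e) :
    ∑ i, ⟪fderiv ℝ W x (e i), e i⟫_ℝ ≤ 1 :=
  stmt_4_general n k hk y W hWgt hWeq x hx hxy e he
end

section
/- Let k > 2 and y ∈ ℝⁿ with |y| < 1, and let W be the vector field W(x) = -(1/k)·(((1-2⟨x,y⟩+|y|²)/|x-y|²)^{k/2} - 1)·(x-y) + (1/(k-2))·(((1-2⟨x,y⟩+|y|²)/|x-y|²)^{(k-2)/2} - 1)·y. Then |x-y|^{k-1} · (W(x) + (1-|y|²)^{k/2}·(x-y)/(k·|x-y|^k)) → 0 as x → y. -/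
open scoped InnerProductSpace Topology
open Filter

/-!
Write `A x = 1 - 2⟪x, y⟫ + ‖y‖²` and `r = ‖x - y‖`. Since `(A / r²) ^ (k / 2) = A ^ (k / 2) / r ^ k`,
multiplying by `r ^ (k - 1)` clears every singular power, and the rescaled field equals
`φ x • (r⁻¹ • (x - y)) + ψ x • y`, where
`φ x = ((1 - ‖y‖²) ^ (k / 2) - A x ^ (k / 2) + r ^ k) / k` and
`ψ x = (A x ^ ((k - 2) / 2) * r - r ^ (k - 1)) / (k - 2)`
are continuous and vanish at `x = y` because `A y = 1 - ‖y‖²`. The unit vector `r⁻¹ • (x - y)` is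
bounded, so both terms tend to `0`.
-/

theorem Real.sq_rpow_natCast_div_two {r : ℝ} (hr : 0 ≤ r) (k : ℕ) :
    (r ^ 2) ^ ((k : ℝ) / 2) = r ^ k := by
  rw [Real.rpow_div_two_eq_sqrt _ (sq_nonneg r), Real.sqrt_sq hr, Real.rpow_natCast]

theorem Real.div_sq_rpow_natCast_div_two {c r : ℝ} (hc : 0 ≤ c) (hr : 0 ≤ r) (k : ℕ) :
    (c / r ^ 2) ^ ((k : ℝ) / 2) = c ^ ((k : ℝ) / 2) / r ^ k := by
  rw [Real.div_rpow hc (sq_nonneg r), Real.sq_rpow_natCast_div_two hr]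

theorem rescaled_field_eq {E : Type*} [AddCommGroup E] [Module ℝ E] {k : ℕ} (hk : 2 ≤ k)
    {a c r : ℝ} (hc : 0 ≤ c) (hr : 0 < r) (v y : E) :
    r ^ (k - 1) • ((-(1 / (k : ℝ)) * ((c / r ^ 2) ^ ((k : ℝ) / 2) - 1)) • v
        + ((1 / ((k : ℝ) - 2)) * ((c / r ^ 2) ^ (((k : ℝ) - 2) / 2) - 1)) • y
        + (a / ((k : ℝ) * r ^ k)) • v)
      = ((a - c ^ ((k : ℝ) / 2) + r ^ k) / k) • (r⁻¹ • v)
        + ((c ^ (((k : ℝ) - 2) / 2) * r - r ^ (k - 1)) / ((k : ℝ) - 2)) • y := by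
  obtain ⟨m, rfl⟩ : ∃ m, k = m + 2 := ⟨k - 2, by omega⟩
  have hm : ((m + 2 : ℕ) : ℝ) - 2 = (m : ℝ) := by push_cast; ring
  rw [hm, Real.div_sq_rpow_natCast_div_two hc hr.le, Real.div_sq_rpow_natCast_div_two hc hr.le,
    show m + 2 - 1 = m + 1 by omega]
  have hr0 := hr.ne'
  match_scalars <;> field_simp <;> ring

section NearCenter

variable {E : Type*} [SeminormedAddCommGroup E] {A : E → ℝ}

theorem tendsto_rpow_sub_rpow_add_norm_sub_pow (hA : Continuous A) (y : E) {p : ℝ} (hp : 0 ≤ p)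
    {k : ℕ} (hk : k ≠ 0) :
    Tendsto (fun x => A y ^ p - A x ^ p + ‖x - y‖ ^ k) (𝓝 y) (𝓝 0) := by
  refine Continuous.tendsto' ?_ y 0 (by simp [zero_pow hk])
  exact (continuous_const.sub (hA.rpow_const fun _ => Or.inr hp)).add (by fun_prop)

theorem tendsto_rpow_mul_norm_sub_sub_pow (hA : Continuous A) (y : E) {p : ℝ} (hp : 0 ≤ p)
    {k : ℕ} (hk : k ≠ 0) :
    Tendsto (fun x => A x ^ p * ‖x - y‖ - ‖x - y‖ ^ k) (𝓝 y) (𝓝 0) := by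
  refine Continuous.tendsto' ?_ y 0 (by simp [zero_pow hk])
  exact ((hA.rpow_const fun _ => Or.inr hp).mul (by fun_prop)).sub (by fun_prop)

theorem isBoundedUnder_norm_inv_norm_smul_sub [NormedSpace ℝ E] (l : Filter E) (y : E) :
    IsBoundedUnder (· ≤ ·) l (norm ∘ fun x => ‖x - y‖⁻¹ • (x - y)) :=
  isBoundedUnder_of ⟨1, fun x => by simpa using inv_norm_smul_mem_unitClosedBall (x - y)⟩

end NearCenter

theorem stmt_6 (n k : ℕ) (hk : 2 < k) (y : EuclideanSpace ℝ (Fin n)) (hy : ‖y‖ < 1)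
    (W : EuclideanSpace ℝ (Fin n) → EuclideanSpace ℝ (Fin n))
    (hW : ∀ x, W x =
      (-(1 / (k : ℝ)) * (((1 - 2 * ⟪x, y⟫_ℝ + ‖y‖ ^ 2) / ‖x - y‖ ^ 2) ^ ((k : ℝ) / 2) - 1)) • (x - y)
      + ((1 / ((k : ℝ) - 2)) * (((1 - 2 * ⟪x, y⟫_ℝ + ‖y‖ ^ 2) / ‖x - y‖ ^ 2) ^ (((k : ℝ) - 2) / 2) - 1)) • y) :
    Filter.Tendsto
      (fun x => ‖x - y‖ ^ (k - 1) •
        (W x + ((1 - ‖y‖ ^ 2) ^ ((k : ℝ) / 2) / ((k : ℝ) * ‖x - y‖ ^ k)) • (x - y)))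
      (𝓝[≠] y) (𝓝 0) := by
  set A : EuclideanSpace ℝ (Fin n) → ℝ := fun x => 1 - 2 * ⟪x, y⟫_ℝ + ‖y‖ ^ 2
  have hA : Continuous A := by fun_prop
  have hAy : A y = 1 - ‖y‖ ^ 2 := by simp only [A, real_inner_self_eq_norm_sq]; ring
  have hA_pos : ∀ᶠ x in 𝓝[≠] y, 0 < A x := by
    refine nhdsWithin_le_nhds (hA.continuousAt.eventually (eventually_gt_nhds ?_))
    rw [hAy]
    nlinarith [norm_nonneg y]
  have hk2 : (0 : ℝ) ≤ ((k : ℝ) - 2) / 2 :=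
    div_nonneg (sub_nonneg.2 (by exact_mod_cast hk.le)) zero_le_two
  have hφ := (tendsto_rpow_sub_rpow_add_norm_sub_pow hA y (by positivity : (0 : ℝ) ≤ (k : ℝ) / 2)
    (by omega : k ≠ 0)).div_const (k : ℝ)
  have hψ := (tendsto_rpow_mul_norm_sub_sub_pow hA y hk2 (by omega : k - 1 ≠ 0)).div_const
    ((k : ℝ) - 2)
  rw [hAy, zero_div] at hφ
  rw [zero_div] at hψ
  have hlim := (hφ.zero_smul_isBoundedUnder_le (isBoundedUnder_norm_inv_norm_smul_sub _ y)).add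
    (hψ.smul_const y)
  rw [zero_smul, add_zero] at hlim
  refine (hlim.mono_left nhdsWithin_le_nhds).congr' ?_
  filter_upwards [hA_pos, self_mem_nhdsWithin] with x hAx hx
  rw [hW, rescaled_field_eq hk.le hAx.le (norm_pos_iff.2 (sub_ne_zero.2 hx))]
end

section
/- Let y ∈ ℝⁿ with |y| < 1, and let W be the 2-dimensional vector field W(x) = -(1/2)·((1-2⟨x,y⟩+|y|²)/|x-y|² - 1)·(x-y) + (1/2)·log((1-2⟨x,y⟩+|y|²)/|x-y|²)·y. Then |x-y| · (W(x) + (1-|y|²)·(x-y)/(2·|x-y|²)) → 0 as x → y. -/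
open scoped InnerProductSpace Topology

/-!
Write `r = ‖x - y‖` and `A x = 1 - 2⟪x, y⟫ + ‖y‖²`. Since `A x = r² + 1 - ‖x‖²`, the radial
coefficients combine to `(‖x‖² - ‖y‖²) / (2 r²)`, so after multiplying by `r` the radial part has
norm `|‖x‖² - ‖y‖²| / 2 → 0`. The part along `y` becomes `r log (A x) / 2 - r log r`, which tends
to `0` because `A y = 1 - ‖y‖² ≠ 0` and `r log r → 0`.
-/

open Filter Real

section

variable {E : Type*} [NormedAddCommGroup E] [InnerProductSpace ℝ E]

noncomputable def fieldW (y x : E) : E :=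
  (-(1 / 2 : ℝ) * ((1 - 2 * ⟪x, y⟫_ℝ + ‖y‖ ^ 2) / ‖x - y‖ ^ 2 - 1)) • (x - y)
    + ((1 / 2 : ℝ) * log ((1 - 2 * ⟪x, y⟫_ℝ + ‖y‖ ^ 2) / ‖x - y‖ ^ 2)) • y

theorem one_sub_two_inner_add_norm_sq (x y : E) :
    1 - 2 * ⟪x, y⟫_ℝ + ‖y‖ ^ 2 = ‖x - y‖ ^ 2 + (1 - ‖x‖ ^ 2) := by
  rw [norm_sub_sq_real]; ring

theorem norm_sub_smul_fieldW_add_eq {x y : E} (hxy : x ≠ y)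
    (hA : 1 - 2 * ⟪x, y⟫_ℝ + ‖y‖ ^ 2 ≠ 0) :
    ‖x - y‖ • (fieldW y x + ((1 - ‖y‖ ^ 2) / (2 * ‖x - y‖ ^ 2)) • (x - y)) =
      ((‖x‖ ^ 2 - ‖y‖ ^ 2) / 2 / ‖x - y‖) • (x - y)
        + (‖x - y‖ * log (1 - 2 * ⟪x, y⟫_ℝ + ‖y‖ ^ 2) / 2 - ‖x - y‖ * log ‖x - y‖) • y := by
  have hr : ‖x - y‖ ≠ 0 := norm_ne_zero_iff.mpr (sub_ne_zero.mpr hxy)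
  have hlog : log ((1 - 2 * ⟪x, y⟫_ℝ + ‖y‖ ^ 2) / ‖x - y‖ ^ 2)
      = log (1 - 2 * ⟪x, y⟫_ℝ + ‖y‖ ^ 2) - 2 * log ‖x - y‖ := by
    rw [log_div hA (pow_ne_zero 2 hr), log_pow, Nat.cast_ofNat]
  rw [fieldW, hlog, one_sub_two_inner_add_norm_sq, smul_add, smul_add, smul_smul, smul_smul,
    smul_smul, add_right_comm, ← add_smul]
  congr 2
  · field_simp; ring
  · ring

end

theorem tendsto_div_norm_sub_smul_sub {E : Type*} [NormedAddCommGroup E] [NormedSpace ℝ E]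
    {f : E → ℝ} {y : E} (hf : Tendsto f (𝓝[≠] y) (𝓝 0)) :
    Tendsto (fun x => (f x / ‖x - y‖) • (x - y)) (𝓝[≠] y) (𝓝 0) := by
  refine squeeze_zero_norm' ?_ (by simpa using hf.abs)
  filter_upwards [self_mem_nhdsWithin] with x hx
  have hr : ‖x - y‖ ≠ 0 := norm_ne_zero_iff.mpr (sub_ne_zero.mpr hx)
  rw [norm_smul, norm_div, norm_norm, div_mul_cancel₀ _ hr, norm_eq_abs]

theorem tendsto_norm_sub_mul_log_norm_sub {E : Type*} [SeminormedAddCommGroup E] (y : E) :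
    Tendsto (fun x => ‖x - y‖ * log ‖x - y‖) (𝓝 y) (𝓝 0) := by
  simpa [Function.comp_def] using (continuous_mul_log.comp (continuous_sub_right y).norm).tendsto y

theorem tendsto_norm_sub_smul_fieldW_add {E : Type*} [NormedAddCommGroup E]
    [InnerProductSpace ℝ E] {y : E} (hy : ‖y‖ ≠ 1) :
    Tendsto (fun x => ‖x - y‖ • (fieldW y x + ((1 - ‖y‖ ^ 2) / (2 * ‖x - y‖ ^ 2)) • (x - y)))
      (𝓝[≠] y) (𝓝 0) := by
  set A : E → ℝ := fun x => 1 - 2 * ⟪x, y⟫_ℝ + ‖y‖ ^ 2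
  have hAcont : Continuous A := by fun_prop
  have hAy : A y ≠ 0 := by
    have : A y = (1 - ‖y‖) * (1 + ‖y‖) := by
      simp only [A, real_inner_self_eq_norm_sq]; ring
    rw [this]
    exact mul_ne_zero (sub_ne_zero.mpr (Ne.symm hy)) (by positivity)
  have hA : ∀ᶠ x in 𝓝[≠] y, A x ≠ 0 :=
    eventually_nhdsWithin_of_eventually_nhds (hAcont.continuousAt.eventually_ne hAy)
  have hradial : Tendsto (fun x : E => (‖x‖ ^ 2 - ‖y‖ ^ 2) / 2) (𝓝[≠] y) (𝓝 0) := by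
    have h : Continuous fun x : E => (‖x‖ ^ 2 - ‖y‖ ^ 2) / 2 := by fun_prop
    simpa using h.tendsto y |>.mono_left nhdsWithin_le_nhds
  have hlogA : Tendsto (fun x => ‖x - y‖ * log (A x)) (𝓝 y) (𝓝 0) := by
    have h : ContinuousAt (fun x => ‖x - y‖ * log (A x)) y := by fun_prop (disch := exact hAy)
    simpa using h.tendsto
  have halong := ((hlogA.div_const 2).sub (tendsto_norm_sub_mul_log_norm_sub y)).smul_const y
  have hsum := (tendsto_div_norm_sub_smul_sub hradial).add (halong.mono_left nhdsWithin_le_nhds)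
  rw [zero_div, sub_zero, zero_smul, add_zero] at hsum
  refine hsum.congr' ?_
  filter_upwards [self_mem_nhdsWithin, hA] with x hx hAx
  exact (norm_sub_smul_fieldW_add_eq hx hAx).symm

theorem stmt_7 (n : ℕ) (y : EuclideanSpace ℝ (Fin n)) (hy : ‖y‖ < 1)
    (W : EuclideanSpace ℝ (Fin n) → EuclideanSpace ℝ (Fin n))
    (hW : ∀ x, W x =
      (-(1 / 2 : ℝ) * ((1 - 2 * ⟪x, y⟫_ℝ + ‖y‖ ^ 2) / ‖x - y‖ ^ 2 - 1)) • (x - y)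
      + ((1 / 2 : ℝ) * Real.log ((1 - 2 * ⟪x, y⟫_ℝ + ‖y‖ ^ 2) / ‖x - y‖ ^ 2)) • y) :
    Filter.Tendsto
      (fun x => ‖x - y‖ •
        (W x + ((1 - ‖y‖ ^ 2) / (2 * ‖x - y‖ ^ 2)) • (x - y)))
      (𝓝[≠] y) (𝓝 0) := by
  obtain rfl : W = fieldW y := funext hW
  exact tendsto_norm_sub_smul_fieldW_add hy.ne
end

section
/- Let k ≥ 2, y ∈ ℝⁿ with |y| < 1, and let W be the vector field of the Alexander–Osserman argument (for k > 2: W(x) = -(1/k)·(Q(x)^{k/2} - 1)·(x-y) + (1/(k-2))·(Q(x)^{(k-2)/2} - 1)·y, where Q(x) = (1-2⟨x,y⟩+|y|²)/|x-y|²; for k = 2: W(x) = -(1/2)·(Q(x)-1)·(x-y) + (1/2)·log Q(x)·y). Then for every x in the open unit ball with x ≠ y, if e₁,…,e_k is an orthonormal family with x - y ∈ span(e₁,…,e_k) and ⟨y,e_i⟩ = 0 for all i, then ∑_{i=1}^k ⟨D_{e_i}W(x), e_i⟩ = 1. -/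
open scoped InnerProductSpace

lemma aux_sum_inner_sq {n k : ℕ} (e : Fin k → EuclideanSpace ℝ (Fin n))
    (he : Orthonormal ℝ e) {u : EuclideanSpace ℝ (Fin n)}
    (hu : u ∈ Submodule.span ℝ (Set.range e)) :
    ∑ i, ⟪u, e i⟫_ℝ ^ 2 = ‖u‖ ^ 2 := by
  obtain ⟨c, rfl⟩ := (Submodule.mem_span_range_iff_exists_fun ℝ).1 hu
  have h1 : ∀ i, ⟪∑ j, c j • e j, e i⟫_ℝ = c i := by
    intro i
    simpa using he.inner_left_fintype c i
  rw [← real_inner_self_eq_norm_sq]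
  rw [he.inner_sum c c Finset.univ]
  simp [h1, sq]

lemma aux_key {n k : ℕ} (y x : EuclideanSpace ℝ (Fin n)) (hxy : x ≠ y)
    (φ ψ : ℝ → ℝ) (φ' ψ' : ℝ)
    (hφ : HasDerivAt φ φ' ((1 - 2 * ⟪x, y⟫_ℝ + ‖y‖ ^ 2) / ‖x - y‖ ^ 2))
    (hψ : HasDerivAt ψ ψ' ((1 - 2 * ⟪x, y⟫_ℝ + ‖y‖ ^ 2) / ‖x - y‖ ^ 2))
    (W : EuclideanSpace ℝ (Fin n) → EuclideanSpace ℝ (Fin n))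
    (hW : ∀ z, W z = φ ((1 - 2 * ⟪z, y⟫_ℝ + ‖y‖ ^ 2) / ‖z - y‖ ^ 2) • (z - y)
      + ψ ((1 - 2 * ⟪z, y⟫_ℝ + ‖y‖ ^ 2) / ‖z - y‖ ^ 2) • y)
    (e : Fin k → EuclideanSpace ℝ (Fin n)) (he : Orthonormal ℝ e)
    (hspan : x - y ∈ Submodule.span ℝ (Set.range e))
    (horth : ∀ i, ⟪y, e i⟫_ℝ = 0) :
    ∑ i, ⟪fderiv ℝ W x (e i), e i⟫_ℝ
      = -2 * ((1 - 2 * ⟪x, y⟫_ℝ + ‖y‖ ^ 2) / ‖x - y‖ ^ 2) * φ'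
        + k * φ ((1 - 2 * ⟪x, y⟫_ℝ + ‖y‖ ^ 2) / ‖x - y‖ ^ 2) := by
  have hu : x - y ≠ 0 := sub_ne_zero.2 hxy
  have hRne : (‖x - y‖ ^ 2 : ℝ) ≠ 0 := by
    have := norm_pos_iff.2 hu
    positivity
  -- derivative of the numerator
  obtain ⟨Nd, hNd, hNdv⟩ : ∃ Nd : EuclideanSpace ℝ (Fin n) →L[ℝ] ℝ,
      HasFDerivAt (fun z : EuclideanSpace ℝ (Fin n) => 1 - 2 * ⟪z, y⟫_ℝ + ‖y‖ ^ 2) Nd x ∧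
      ∀ v, Nd v = -2 * ⟪y, v⟫_ℝ := by
    refine ⟨-((2:ℝ) • (innerSL ℝ y)) + 0, ?_, ?_⟩
    · have h0 : (fun z : EuclideanSpace ℝ (Fin n) => 1 - 2 * ⟪z, y⟫_ℝ + ‖y‖ ^ 2)
          = fun z => 1 - 2 * ⟪y, z⟫_ℝ + ‖y‖ ^ 2 := by
        funext z; rw [real_inner_comm]
      rw [h0]
      have h1 : HasFDerivAt (fun z : EuclideanSpace ℝ (Fin n) => ⟪y, z⟫_ℝ) (innerSL ℝ y) x :=
        (innerSL ℝ y).hasFDerivAt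
      simpa using ((h1.const_mul (2:ℝ)).const_sub 1).add_const (‖y‖ ^ 2)
    · intro v; simp
  -- derivative of the denominator
  obtain ⟨Rd, hRd, hRdv⟩ : ∃ Rd : EuclideanSpace ℝ (Fin n) →L[ℝ] ℝ,
      HasFDerivAt (fun z : EuclideanSpace ℝ (Fin n) => ‖z - y‖ ^ 2) Rd x ∧
      ∀ v, Rd v = 2 * ⟪x - y, v⟫_ℝ := by
    have hid : HasFDerivAt (fun z : EuclideanSpace ℝ (Fin n) => z - y)
        (ContinuousLinearMap.id ℝ _) x := (hasFDerivAt_id x).sub_const y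
    have h0 : (fun z : EuclideanSpace ℝ (Fin n) => ‖z - y‖ ^ 2)
        = fun z => ⟪z - y, z - y⟫_ℝ := by
      funext z; rw [real_inner_self_eq_norm_sq]
    refine ⟨_, h0 ▸ hid.inner ℝ hid, ?_⟩
    intro v
    simp only [fderivInnerCLM_apply, ContinuousLinearMap.comp_apply,
      ContinuousLinearMap.prod_apply, ContinuousLinearMap.id_apply, two_mul]
    rw [real_inner_comm]
  -- derivative of the quotient
  obtain ⟨Dq, hDq, hDqv⟩ : ∃ Dq : EuclideanSpace ℝ (Fin n) →L[ℝ] ℝ,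
      HasFDerivAt (fun z : EuclideanSpace ℝ (Fin n) =>
        (1 - 2 * ⟪z, y⟫_ℝ + ‖y‖ ^ 2) / ‖z - y‖ ^ 2) Dq x ∧
      ∀ v, Dq v = (‖x - y‖ ^ 2 : ℝ)⁻¹ * Nd v
        + ((1 - 2 * ⟪x, y⟫_ℝ + ‖y‖ ^ 2) * -(((‖x - y‖ ^ 2 : ℝ)) ^ 2)⁻¹) * Rd v := by
    have hinv : HasFDerivAt (fun z : EuclideanSpace ℝ (Fin n) => (‖z - y‖ ^ 2)⁻¹)
        ((-(((‖x - y‖ ^ 2 : ℝ)) ^ 2)⁻¹) • Rd) x := by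
      exact (hasDerivAt_inv hRne).comp_hasFDerivAt x hRd
    have hmul := hNd.mul hinv
    have h0 : (fun z : EuclideanSpace ℝ (Fin n) =>
        (1 - 2 * ⟪z, y⟫_ℝ + ‖y‖ ^ 2) / ‖z - y‖ ^ 2)
        = fun z => (1 - 2 * ⟪z, y⟫_ℝ + ‖y‖ ^ 2) * (‖z - y‖ ^ 2)⁻¹ := by
      funext z; rw [div_eq_mul_inv]
    refine ⟨_, by rw [h0]; exact hmul, ?_⟩
    intro v
    simp only [ContinuousLinearMap.add_apply, ContinuousLinearMap.coe_smul',
      Pi.smul_apply, smul_eq_mul]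
    ring
  -- derivative of W
  have hcφ : HasFDerivAt (fun z : EuclideanSpace ℝ (Fin n) =>
      φ ((1 - 2 * ⟪z, y⟫_ℝ + ‖y‖ ^ 2) / ‖z - y‖ ^ 2)) (φ' • Dq) x := by
    simpa [Function.comp_def] using hφ.comp_hasFDerivAt x hDq
  have hcψ : HasFDerivAt (fun z : EuclideanSpace ℝ (Fin n) =>
      ψ ((1 - 2 * ⟪z, y⟫_ℝ + ‖y‖ ^ 2) / ‖z - y‖ ^ 2)) (ψ' • Dq) x := by
    simpa [Function.comp_def] using hψ.comp_hasFDerivAt x hDq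
  have h1 := hcφ.smul ((hasFDerivAt_id x).sub_const y)
  have h2 := hcψ.smul (hasFDerivAt_const y x)
  have hWeq : W = fun z => φ ((1 - 2 * ⟪z, y⟫_ℝ + ‖y‖ ^ 2) / ‖z - y‖ ^ 2) • (z - y)
      + ψ ((1 - 2 * ⟪z, y⟫_ℝ + ‖y‖ ^ 2) / ‖z - y‖ ^ 2) • y := funext hW
  have hWd : HasFDerivAt W _ x :=
    (h1.add h2).congr_of_eventuallyEq (Filter.Eventually.of_forall fun z => by rw [hW]; rfl)
  rw [hWd.fderiv]
  have heval : ∀ i, ⟪(φ ((1 - 2 * ⟪x, y⟫_ℝ + ‖y‖ ^ 2) / ‖x - y‖ ^ 2) •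
        ContinuousLinearMap.id ℝ (EuclideanSpace ℝ (Fin n)) +
        (φ' • Dq).smulRight (id x - y) +
        (ψ ((1 - 2 * ⟪x, y⟫_ℝ + ‖y‖ ^ 2) / ‖x - y‖ ^ 2) • (0 : _) +
        (ψ' • Dq).smulRight y)) (e i), e i⟫_ℝ
      = φ ((1 - 2 * ⟪x, y⟫_ℝ + ‖y‖ ^ 2) / ‖x - y‖ ^ 2)
        + (φ' * (-2 * (1 - 2 * ⟪x, y⟫_ℝ + ‖y‖ ^ 2) / (‖x - y‖ ^ 2 : ℝ) ^ 2))
          * ⟪x - y, e i⟫_ℝ ^ 2 := by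
    intro i
    have hei : ⟪e i, e i⟫_ℝ = 1 := by
      rw [real_inner_self_eq_norm_sq, he.1 i]; norm_num
    have hDqe : Dq (e i) = ((1 - 2 * ⟪x, y⟫_ℝ + ‖y‖ ^ 2) * -(((‖x - y‖ ^ 2 : ℝ)) ^ 2)⁻¹)
        * (2 * ⟪x - y, e i⟫_ℝ) := by
      rw [hDqv, hNdv, hRdv, horth i]; ring
    simp only [ContinuousLinearMap.add_apply, ContinuousLinearMap.coe_smul',
      Pi.smul_apply, ContinuousLinearMap.id_apply, ContinuousLinearMap.smulRight_apply,
      ContinuousLinearMap.zero_apply, smul_zero, zero_add, smul_eq_mul, id_eq]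
    rw [inner_add_left, inner_add_left, inner_smul_left, inner_smul_left, inner_smul_left]
    simp only [RCLike.star_def, conj_trivial, hei, mul_one, hDqe, horth i]
    ring
  rw [Finset.sum_congr rfl fun i _ => heval i]
  rw [Finset.sum_add_distrib, Finset.sum_const, ← Finset.mul_sum]
  rw [aux_sum_inner_sq e he hspan]
  simp only [Finset.card_univ, Fintype.card_fin, nsmul_eq_mul]
  field_simp
  ring

theorem stmt_13 (n k : ℕ) (hk : 2 ≤ k) (y : EuclideanSpace ℝ (Fin n)) (hy : ‖y‖ < 1)
    (W : EuclideanSpace ℝ (Fin n) → EuclideanSpace ℝ (Fin n))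
    (hWgt : 2 < k → ∀ x, W x =
      (-(1 / (k : ℝ)) * (((1 - 2 * ⟪x, y⟫_ℝ + ‖y‖ ^ 2) / ‖x - y‖ ^ 2) ^ ((k : ℝ) / 2) - 1)) • (x - y)
      + ((1 / ((k : ℝ) - 2)) * (((1 - 2 * ⟪x, y⟫_ℝ + ‖y‖ ^ 2) / ‖x - y‖ ^ 2) ^ (((k : ℝ) - 2) / 2) - 1)) • y)
    (hWeq : k = 2 → ∀ x, W x =
      (-(1 / 2 : ℝ) * ((1 - 2 * ⟪x, y⟫_ℝ + ‖y‖ ^ 2) / ‖x - y‖ ^ 2 - 1)) • (x - y)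
      + ((1 / 2 : ℝ) * Real.log ((1 - 2 * ⟪x, y⟫_ℝ + ‖y‖ ^ 2) / ‖x - y‖ ^ 2)) • y)
    (x : EuclideanSpace ℝ (Fin n)) (hx : ‖x‖ < 1) (hxy : x ≠ y)
    (e : Fin k → EuclideanSpace ℝ (Fin n)) (he : Orthonormal ℝ e)
    (hspan : x - y ∈ Submodule.span ℝ (Set.range e))
    (horth : ∀ i, ⟪y, e i⟫_ℝ = 0) :
    ∑ i, ⟪fderiv ℝ W x (e i), e i⟫_ℝ = 1 := by
  have hu : x - y ≠ 0 := sub_ne_zero.2 hxy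
  have hRpos : (0:ℝ) < ‖x - y‖ ^ 2 := by
    have := norm_pos_iff.2 hu
    positivity
  have hNpos : (0:ℝ) < 1 - 2 * ⟪x, y⟫_ℝ + ‖y‖ ^ 2 := by
    have hxy2 : ‖x - y‖ ^ 2 = ‖x‖ ^ 2 - 2 * ⟪x, y⟫_ℝ + ‖y‖ ^ 2 := by
      rw [← real_inner_self_eq_norm_sq, ← real_inner_self_eq_norm_sq,
        ← real_inner_self_eq_norm_sq]
      simp only [inner_sub_left, inner_sub_right]
      rw [real_inner_comm y x]
      ring
    nlinarith [sq_nonneg ‖x‖, norm_nonneg x]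
  set Q : ℝ := (1 - 2 * ⟪x, y⟫_ℝ + ‖y‖ ^ 2) / ‖x - y‖ ^ 2 with hQdef
  have hQpos : 0 < Q := div_pos hNpos hRpos
  rcases lt_or_eq_of_le hk with h2k | h2k
  · -- k > 2
    have hk0 : (k : ℝ) ≠ 0 := by positivity
    have hφ : HasDerivAt (fun t : ℝ => -(1 / (k : ℝ)) * (t ^ ((k : ℝ) / 2) - 1))
        (-(1 / (k : ℝ)) * ((k : ℝ) / 2 * Q ^ ((k : ℝ) / 2 - 1))) Q :=
      ((Real.hasDerivAt_rpow_const (Or.inl hQpos.ne')).sub_const 1).const_mul _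
    have hψ : HasDerivAt (fun t : ℝ => (1 / ((k : ℝ) - 2)) * (t ^ (((k : ℝ) - 2) / 2) - 1))
        ((1 / ((k : ℝ) - 2)) * (((k : ℝ) - 2) / 2 * Q ^ (((k : ℝ) - 2) / 2 - 1))) Q :=
      ((Real.hasDerivAt_rpow_const (Or.inl hQpos.ne')).sub_const 1).const_mul _
    rw [aux_key y x hxy _ _ _ _ hφ hψ W (hWgt h2k) e he hspan horth]
    have hQQ : Q * Q ^ ((k : ℝ) / 2 - 1) = Q ^ ((k : ℝ) / 2) := by
      have h := Real.rpow_add hQpos 1 ((k : ℝ) / 2 - 1)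
      rw [Real.rpow_one] at h
      rw [← h]
      ring_nf
    beta_reduce
    have h2 : -2 * Q * (-(1/(k:ℝ)) * ((k:ℝ)/2 * Q ^ ((k : ℝ) / 2 - 1)))
        = ((k:ℝ) * (1/(k:ℝ))) * (Q * Q ^ ((k : ℝ) / 2 - 1)) := by ring
    have h3 : (k:ℝ) * (-(1/(k:ℝ)) * (Q ^ ((k : ℝ) / 2) - 1))
        = -(((k:ℝ) * (1/(k:ℝ))) * (Q ^ ((k : ℝ) / 2) - 1)) := by ring
    rw [h2, h3, mul_one_div, div_self hk0, hQQ]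
    ring
  · -- k = 2
    have hk2 : k = 2 := h2k.symm
    subst hk2
    have hφ : HasDerivAt (fun t : ℝ => -(1 / 2 : ℝ) * (t - 1)) (-(1 / 2 : ℝ) * 1) Q :=
      ((hasDerivAt_id Q).sub_const 1).const_mul _
    have hψ : HasDerivAt (fun t : ℝ => (1 / 2 : ℝ) * Real.log t) ((1 / 2 : ℝ) * Q⁻¹) Q :=
      (Real.hasDerivAt_log hQpos.ne').const_mul _
    rw [aux_key y x hxy _ _ _ _ hφ hψ W (hWeq rfl) e he hspan horth]
    push_cast
    ring
end
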